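/- Let n ≥ 1, let c ∈ ℝ^n with c_i > 0 for all i, let β ∈ (0,1), and set α = 1/(1-β). If p lies in the standard simplex {p ∈ ℝ^n : p_i ≥ 0, ∑_i p_i ≤ 1} and achieves ∑_{i=1}^n c_i · p_i^β = (∑_{i=1}^n c_i^α)^{1/α}, then p is the generalized proportional allocation, i.e. p_i = c_i^α / ∑_{j=1}^n c_j^α for every i. That is, when all ecpm values are strictly positive, the generalized proportional allocation is the unique welfare-maximizing prominence allocation. -/

import Mathlib

/-!
With `q i = c i ^ α / ∑ j, c j ^ α`, the marginal welfare `β * c i * q i ^ (β - 1)` equals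
`β * (∑ j, c j ^ α) ^ (1 - β)` for every `i`, so `q` satisfies the KKT conditions of the concave
program `max ∑ c i * p i ^ β` over the simplex. Summing the tangent-line bounds of the strictly
concave `x ↦ x ^ β` at `q i` shows that every feasible `p` has welfare at most that of `q`, namely
`(∑ j, c j ^ α) ^ (1 - β)`, with equality only if every tangent bound is tight, i.e. `p = q`.
-/

open Finset Real

section TangentLine

variable {β : ℝ} (hβ0 : 0 < β) (hβ1 : β < 1) {q x : ℝ} (hq : 0 < q) (hx : 0 ≤ x)
include hβ0 hβ1 hq hx

theorem rpow_lt_tangent (hne : x ≠ q) : x ^ β < q ^ β + β * q ^ (β - 1) * (x - q) := by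
  have hxq : x ^ β = q ^ β * (1 + (x / q - 1)) ^ β := by
    rw [add_sub_cancel, ← mul_rpow hq.le (div_nonneg hx hq.le), mul_div_cancel₀ _ hq.ne']
  have hbernoulli : (1 + (x / q - 1)) ^ β < 1 + β * (x / q - 1) := by
    refine rpow_one_add_lt_one_add_mul_self ?_ ?_ hβ0 hβ1
    · linarith [div_nonneg hx hq.le]
    · rwa [sub_ne_zero, Ne, div_eq_one_iff_eq hq.ne']
  calc x ^ β = q ^ β * (1 + (x / q - 1)) ^ β := hxq
    _ < q ^ β * (1 + β * (x / q - 1)) := mul_lt_mul_of_pos_left hbernoulli (rpow_pos_of_pos hq β)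
    _ = q ^ β + β * q ^ (β - 1) * (x - q) := by rw [rpow_sub_one hq.ne']; field_simp

theorem rpow_le_tangent : x ^ β ≤ q ^ β + β * q ^ (β - 1) * (x - q) := by
  rcases eq_or_ne x q with rfl | hne
  · simp
  · exact (rpow_lt_tangent hβ0 hβ1 hq hx hne).le

end TangentLine

theorem eq_of_le_sum_mul_rpow_of_mul_rpow_sub_one_eq {ι : Type*} [Fintype ι] {β L : ℝ}
    (hβ0 : 0 < β) (hβ1 : β < 1) {w p q : ι → ℝ} (hw : ∀ i, 0 < w i) (hq : ∀ i, 0 < q i)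
    (hq_sum : ∑ i, q i = 1) (hgrad : ∀ i, w i * q i ^ (β - 1) = L)
    (hp : ∀ i, 0 ≤ p i) (hp_sum : ∑ i, p i ≤ 1) (hopt : L ≤ ∑ i, w i * p i ^ β) :
    p = q := by
  by_contra hne
  obtain ⟨i₀, hi₀⟩ := Function.ne_iff.mp hne
  have hL : 0 < L := hgrad i₀ ▸ mul_pos (hw i₀) (rpow_pos_of_pos (hq i₀) _)
  have htangent (i : ι) :
      w i * (q i ^ β + β * q i ^ (β - 1) * (p i - q i)) = L * q i + β * L * (p i - q i) := by
    have hqi := (hq i).ne'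
    rw [← hgrad i, rpow_sub_one hqi]
    field_simp
  have hlt : ∑ i, w i * p i ^ β < ∑ i, (L * q i + β * L * (p i - q i)) := by
    refine sum_lt_sum (fun i _ => ?_) ⟨i₀, mem_univ _, ?_⟩
    · exact htangent i ▸ mul_le_mul_of_nonneg_left
        (rpow_le_tangent hβ0 hβ1 (hq i) (hp i)) (hw i).le
    · exact htangent i₀ ▸ mul_lt_mul_of_pos_left
        (rpow_lt_tangent hβ0 hβ1 (hq i₀) (hp i₀) hi₀) (hw i₀)
  have hsum : ∑ i, (L * q i + β * L * (p i - q i)) = L + β * L * (∑ i, p i - 1) := by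
    rw [sum_add_distrib, ← mul_sum, ← mul_sum, sum_sub_distrib, hq_sum, mul_one]
  nlinarith [mul_pos hβ0 hL]

theorem mul_div_rpow_sub_one_eq {α β c S : ℝ} (hα : α * (1 - β) = 1) (hc : 0 < c) (hS : 0 < S) :
    c * (c ^ α / S) ^ (β - 1) = S ^ (1 - β) := by
  have hexp : α * (β - 1) = -1 := by linarith
  rw [div_rpow (rpow_nonneg hc.le _) hS.le, ← rpow_mul hc.le, hexp, rpow_neg_one,
    show β - 1 = -(1 - β) by ring, rpow_neg hS.le]
  field_simp

theorem dwls_gpa_unique_maximizer_general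
    (n : ℕ) (c : Fin n → ℝ) (hc : ∀ i, 0 < c i)
    (β : ℝ) (hβ0 : 0 < β) (hβ1 : β < 1) (α : ℝ) (hα : α = 1 / (1 - β))
    (p : Fin n → ℝ) (hp : ∀ i, 0 ≤ p i) (hpsum : ∑ i, p i ≤ 1)
    (hopt : ∑ i, c i * (p i) ^ β = (∑ i, (c i) ^ α) ^ (1 / α)) :
    ∀ i, p i = (c i) ^ α / ∑ j, (c j) ^ α := by
  intro i
  set S := ∑ j, c j ^ α
  have hS : 0 < S := sum_pos (fun j _ => rpow_pos_of_pos (hc j) α) ⟨i, mem_univ i⟩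
  have hα' : α * (1 - β) = 1 := by rw [hα]; field_simp [(sub_pos.mpr hβ1).ne']
  have hq_sum : ∑ j, c j ^ α / S = 1 := by rw [← sum_div, div_self hS.ne']
  refine congrFun (eq_of_le_sum_mul_rpow_of_mul_rpow_sub_one_eq (q := fun j => c j ^ α / S)
    hβ0 hβ1 hc (fun j => div_pos (rpow_pos_of_pos (hc j) α) hS) hq_sum
    (fun j => mul_div_rpow_sub_one_eq hα' (hc j) hS) hp hpsum ?_) i
  rw [hopt, one_div, ← eq_inv_of_mul_eq_one_right hα']

/-- When all ecpm values are strictly positive, any feasible prominence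
allocation achieving welfare equal to the `α`-norm of `c` must be the generalized
proportional allocation, i.e. the welfare maximizer is unique. -/
theorem dwls_gpa_unique_maximizer
    (n : ℕ) (hn : 1 ≤ n) (c : Fin n → ℝ) (hc : ∀ i, 0 < c i)
    (β : ℝ) (hβ0 : 0 < β) (hβ1 : β < 1) (α : ℝ) (hα : α = 1 / (1 - β))
    (p : Fin n → ℝ) (hp : ∀ i, 0 ≤ p i) (hpsum : ∑ i, p i ≤ 1)
    (hopt : ∑ i, c i * (p i) ^ β = (∑ i, (c i) ^ α) ^ (1 / α)) :
    ∀ i, p i = (c i) ^ α / ∑ j, (c j) ^ α :=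
  dwls_gpa_unique_maximizer_general n c hc β hβ0 hβ1 α hα p hp hpsum hopt
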